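/- Let φ : A⁺ → S be a surjective homomorphism onto a finite semigroup, u,v,x,y ∈ A⁺ with uv and xy having the same image under the two-sided connected expansion (i.e., uv ≈_φ xy). Then in the two-sided Cayley graph Γ_φ there is a (possibly empty) path from the vertex (φ(u),φ(v)) to the vertex (φ(x),φ(y)), or a path from (φ(x),φ(y)) to (φ(u),φ(v)). -/

import Mathlib

variable {A S : Type*}

/-- Image of a word under the extension of `φ` to the free monoid, in `S¹ = WithOne S`. -/
def phiStar [Semigroup S] (φ : A → S) (w : List A) : WithOne S :=
  (w.map fun a => (φ a : WithOne S)).prod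

/-- `φ` induces a surjective homomorphism `A⁺ → S`. -/
def PlusSurj [Semigroup S] (φ : A → S) : Prop :=
  ∀ s : S, ∃ w : List A, w ≠ [] ∧ phiStar φ w = (s : WithOne S)

/-- An edge `((s₁,t₁), a, (s₂,t₂))` of the two-sided Cayley graph `Γ_φ`. -/
def IsEdge [Semigroup S] (φ : A → S)
    (e : (WithOne S × WithOne S) × A × (WithOne S × WithOne S)) : Prop :=
  e.1.1 * (φ e.2.1 : WithOne S) = e.2.2.1 ∧ e.1.2 = (φ e.2.1 : WithOne S) * e.2.2.2

/-- There is a path labeled `w` from `p` to `q` in `Γ_φ`. -/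
def HasPath [Semigroup S] (φ : A → S) (p q : WithOne S × WithOne S) (w : List A) : Prop :=
  p.1 * phiStar φ w = q.1 ∧ p.2 = phiStar φ w * q.2

/-- There is a (possibly empty) path from `p` to `q` in `Γ_φ`. -/
def Reach [Semigroup S] (φ : A → S) (p q : WithOne S × WithOne S) : Prop :=
  ∃ w : List A, HasPath φ p q w

/-- `p` and `q` lie in the same strongly connected component of `Γ_φ`. -/
def SameSCC [Semigroup S] (φ : A → S) (p q : WithOne S × WithOne S) : Prop :=
  Reach φ p q ∧ Reach φ q p

/-- `p` is a vertex of the canonical path `p_u` of the word `u` in `Γ_φ`. -/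
def OnPath [Semigroup S] (φ : A → S) (u : List A) (p : WithOne S × WithOne S) : Prop :=
  ∃ u₁ u₂ : List A, u = u₁ ++ u₂ ∧ p = (phiStar φ u₁, phiStar φ u₂)

/-- The paths `p_u` and `p_v` meet the same strongly connected components of `Γ_φ`,
i.e. `C(p_u) = C(p_v)`. -/
def SameComponents [Semigroup S] (φ : A → S) (u v : List A) : Prop :=
  (∀ p, OnPath φ u p → ∃ q, OnPath φ v q ∧ SameSCC φ p q) ∧
  (∀ q, OnPath φ v q → ∃ p, OnPath φ u p ∧ SameSCC φ p q)

/-- The two-sided connected congruence `u ≈_φ v`. -/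
def ConnCong [Semigroup S] (φ : A → S) (u v : List A) : Prop :=
  phiStar φ u = phiStar φ v ∧ SameComponents φ u v

/-- `e` is an edge traversed by the canonical path `p_u` in `Γ_φ`. -/
def EdgeOfPath [Semigroup S] (φ : A → S) (u : List A)
    (e : (WithOne S × WithOne S) × A × (WithOne S × WithOne S)) : Prop :=
  ∃ u₁ u₂ : List A, u = u₁ ++ e.2.1 :: u₂ ∧
    e.1 = (phiStar φ u₁, phiStar φ (e.2.1 :: u₂)) ∧
    e.2.2 = (phiStar φ (u₁ ++ [e.2.1]), phiStar φ u₂)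

/-- `e` is a transition edge traversed by `p_u`: an edge of `p_u` whose endpoints lie in
distinct strongly connected components of `Γ_φ`. -/
def IsTransitionOfPath [Semigroup S] (φ : A → S) (u : List A)
    (e : (WithOne S × WithOne S) × A × (WithOne S × WithOne S)) : Prop :=
  EdgeOfPath φ u e ∧ ¬ SameSCC φ e.1 e.2.2

/-- The two-sided Karnofsky–Rhodes congruence `u ≡_φ v`: same image under `φ` and same set
of transition edges. -/
def KRCong [Semigroup S] (φ : A → S) (u v : List A) : Prop :=
  phiStar φ u = phiStar φ v ∧
  ∀ e, IsTransitionOfPath φ u e ↔ IsTransitionOfPath φ v e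


/-!
The vertex `(φ(u), φ(v))` lies on the canonical path `p_{uv}`, so `uv ≈_φ xy` provides a vertex `q`
of `p_{xy}` in its strongly connected component. Vertices of a single canonical path are linearly
ordered by reachability, since the path itself runs from one to the other; hence `q` and
`(φ(x), φ(y))` are comparable, and composing with the component of `q` gives the claim.
-/

@[simp]
lemma phiStar_append [Semigroup S] (φ : A → S) (a b : List A) :
    phiStar φ (a ++ b) = phiStar φ a * phiStar φ b := by
  simp [phiStar]

lemma Reach.trans [Semigroup S] {φ : A → S} {p q r : WithOne S × WithOne S}
    (hpq : Reach φ p q) (hqr : Reach φ q r) : Reach φ p r := by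
  obtain ⟨w₁, h₁, h₁'⟩ := hpq
  obtain ⟨w₂, h₂, h₂'⟩ := hqr
  exact ⟨w₁ ++ w₂, by rw [phiStar_append, ← mul_assoc, h₁, h₂],
    by rw [phiStar_append, mul_assoc, ← h₂', h₁']⟩

lemma hasPath_append [Semigroup S] (φ : A → S) (a m b : List A) :
    HasPath φ (phiStar φ a, phiStar φ (m ++ b)) (phiStar φ (a ++ m), phiStar φ b) m := by
  simp [HasPath]

lemma OnPath.reach_or_reach [Semigroup S] {φ : A → S} {w : List A} {p q : WithOne S × WithOne S}
    (hp : OnPath φ w p) (hq : OnPath φ w q) : Reach φ p q ∨ Reach φ q p := by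
  obtain ⟨p₁, p₂, rfl, rfl⟩ := hp
  obtain ⟨q₁, q₂, hsplit, rfl⟩ := hq
  rcases List.append_eq_append_iff.mp hsplit with ⟨m, rfl, rfl⟩ | ⟨m, rfl, rfl⟩
  · exact .inl ⟨m, hasPath_append φ _ m _⟩
  · exact .inr ⟨m, hasPath_append φ _ m _⟩

theorem reach_of_connCong_general [Semigroup S]
    (φ : A → S)
    (u v x y : List A)
    (h : ConnCong φ (u ++ v) (x ++ y)) :
    Reach φ (phiStar φ u, phiStar φ v) (phiStar φ x, phiStar φ y) ∨
    Reach φ (phiStar φ x, phiStar φ y) (phiStar φ u, phiStar φ v) := by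
  obtain ⟨q, hq, huv_q, hq_uv⟩ := h.2.1 (phiStar φ u, phiStar φ v) ⟨u, v, rfl, rfl⟩
  rcases hq.reach_or_reach (⟨x, y, rfl, rfl⟩ : OnPath φ (x ++ y) _) with hq_xy | hxy_q
  · exact .inl (huv_q.trans hq_xy)
  · exact .inr (hxy_q.trans hq_uv)

/-- If `uv ≈_φ xy` then in `Γ_φ` there is a path from `(φ(u),φ(v))` to `(φ(x),φ(y))` or a
path from `(φ(x),φ(y))` to `(φ(u),φ(v))`. -/
theorem reach_of_connCong [Finite S] [Semigroup S]
    (φ : A → S) (hφ : PlusSurj φ)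
    (u v x y : List A) (hu : u ≠ []) (hv : v ≠ []) (hx : x ≠ []) (hy : y ≠ [])
    (h : ConnCong φ (u ++ v) (x ++ y)) :
    Reach φ (phiStar φ u, phiStar φ v) (phiStar φ x, phiStar φ y) ∨
    Reach φ (phiStar φ x, phiStar φ y) (phiStar φ u, phiStar φ v) :=
  reach_of_connCong_general φ u v x y h
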